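/- arXiv:2308.06277 — 4 statements merged into one kernel-verified Lean document; each statement's English description precedes it below -/
import Mathlib

section
/- There is a constant C such that for every BNL-program Λ over a finite linearly ordered set T of schema variables, with ℓ input predicates and size s, there exist a finite set Π of proposition symbols with |Π| ≥ ℓ and a (Π,T)-program Λ' of SC of size at most C·s such that Λ' is globally equivalent to Λ. -/
/-! ### Boolean network logic (BNL) -/

/-- Formulas of Boolean network logic (BNL), over schema variables indexed by `ℕ`. -/
inductive BForm where
  | tru : BForm
  | var : ℕ → BForm
  | not : BForm → BForm
  | and : BForm → BForm → BForm

namespace BForm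

/-- Truth value of a BNL-formula under a valuation of the schema variables. -/
def eval (g : ℕ → Bool) : BForm → Bool
  | tru => true
  | var x => g x
  | not φ => !(eval g φ)
  | and φ ψ => eval g φ && eval g ψ

/-- Number of occurrences of `⊤`, variables, `¬` and `∧`. -/
def size : BForm → ℕ
  | tru => 1
  | var _ => 1
  | not φ => size φ + 1
  | and φ ψ => size φ + size ψ + 1

/-- Connective-nesting depth. -/
def depth : BForm → ℕ
  | tru => 0
  | var _ => 0
  | not φ => depth φ + 1
  | and φ ψ => max (depth φ) (depth ψ) + 1

/-- The set of schema variables occurring in a formula. -/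
def vars : BForm → Finset ℕ
  | tru => ∅
  | var x => {x}
  | not φ => vars φ
  | and φ ψ => vars φ ∪ vars ψ

end BForm

/-- A BNL-program over the finite set `T` of schema variables (linearly ordered as natural
numbers), with input predicates `I`, terminal values `term` (relevant on `T \ I`), iteration
clause bodies `iter` (relevant on `T`), print predicates `Pr` and attention predicates `At`. -/
structure BNL where
  T : Finset ℕ
  I : Finset ℕ
  hIT : I ⊆ T
  term : ℕ → Bool
  iter : ℕ → BForm
  hiter : ∀ X ∈ T, (iter X).vars ⊆ T
  Pr : Finset ℕ
  hPr : Pr ⊆ T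
  At : Finset ℕ
  hAt : At ⊆ T

/-- The valuation of the elements of a finite set `I ⊆ ℕ` induced by the bit string `u`,
via the increasing enumeration of `I`. -/
def inputVal (I : Finset ℕ) (u : ℕ → Bool) (X : ℕ) : Bool :=
  u ((I.sort (· ≤ ·)).idxOf X)

namespace BNL

/-- The global configuration of a BNL-program at round `t` on input bit string `u`. -/
def conf (Λ : BNL) (u : ℕ → Bool) : ℕ → ℕ → Bool
  | 0 => fun X => if X ∈ Λ.I then inputVal Λ.I u X else Λ.term X
  | t + 1 => fun X => (Λ.iter X).eval (Λ.conf u t)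

/-- The global configuration string at round `t`: the values on `T` in increasing order. -/
def confStr (Λ : BNL) (u : ℕ → Bool) (t : ℕ) : List Bool :=
  (Λ.T.sort (· ≤ ·)).map (Λ.conf u t)

/-- Round `t` is an output round iff some attention predicate is true at round `t`. -/
def attn (Λ : BNL) (u : ℕ → Bool) (t : ℕ) : Prop :=
  ∃ X ∈ Λ.At, Λ.conf u t X = true

/-- The print string at round `t`: the values of the print predicates in increasing order. -/
def out (Λ : BNL) (u : ℕ → Bool) (t : ℕ) : List Bool :=
  (Λ.Pr.sort (· ≤ ·)).map (Λ.conf u t)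

/-- The size of a BNL-program: the total number of occurrences of `⊤`, variables, `¬`
and `∧` in its terminal and iteration clauses. -/
def size (Λ : BNL) : ℕ :=
  (Λ.T \ Λ.I).card + ∑ X ∈ Λ.T, (Λ.iter X).size

/-- The depth of a BNL-program: the maximum depth of the bodies of its iteration clauses. -/
def depth (Λ : BNL) : ℕ :=
  Λ.T.sup fun X => (Λ.iter X).depth

/-- Pointwise transient time: the least `t` such that `g_t = g_{t+c}` on `T` for some `c ≥ 1`. -/
noncomputable def transientAt (Λ : BNL) (u : ℕ → Bool) : ℕ :=
  sInf {t | ∃ c, 1 ≤ c ∧ ∀ X ∈ Λ.T, Λ.conf u (t + c) X = Λ.conf u t X}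

/-- The transient time of a program: the maximum of its pointwise transient times. -/
def HasTransientTime (Λ : BNL) (n : ℕ) : Prop :=
  (∀ u, Λ.transientAt u ≤ n) ∧ ∃ u, Λ.transientAt u = n

end BNL

/-- An abstract machine producing, for each input bit string, a global configuration string,
an attention condition, and a print string at every round. -/
structure Machine where
  ins : ℕ
  prints : ℕ
  conf : (ℕ → Bool) → ℕ → List Bool
  attn : (ℕ → Bool) → ℕ → Prop
  out : (ℕ → Bool) → ℕ → List Bool

/-- The output rounds of a machine on a given input, as an ordered subtype of `ℕ`. -/
abbrev Machine.Rounds (M : Machine) (u : ℕ → Bool) := {t : ℕ // M.attn u t}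

/-- The machine determined by a BNL-program. -/
def BNL.toM (Λ : BNL) : Machine :=
  ⟨Λ.I.card, Λ.Pr.card, Λ.confStr, Λ.attn, Λ.out⟩

/-- Asynchronous equivalence: equally many input and print positions and, on every input,
an order isomorphism between the output rounds under which the outputs agree. -/
def AsyncEquiv (M₁ M₂ : Machine) : Prop :=
  M₁.ins = M₂.ins ∧ M₁.prints = M₂.prints ∧
  ∀ u : ℕ → Bool, ∃ e : M₁.Rounds u ≃o M₂.Rounds u,
    ∀ t : M₁.Rounds u, M₁.out u t.val = M₂.out u (e t).val

/-- Global equivalence: asynchronous equivalence together with identical global configuration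
sequences and identical output rounds on every input. -/
def GlobalEquiv (M₁ M₂ : Machine) : Prop :=
  AsyncEquiv M₁ M₂ ∧ ∀ u t, M₁.conf u t = M₂.conf u t ∧ (M₁.attn u t ↔ M₂.attn u t)

/-- `M₁` is asynchronously equivalent to `M₂` with computation delay at most `D`:
matched output rounds `x` of `M₁` and `y` of `M₂` satisfy `y ≤ x` and `x ≤ D·y`. -/
def EquivWithDelay (M₁ M₂ : Machine) (D : ℕ) : Prop :=
  M₁.ins = M₂.ins ∧ M₁.prints = M₂.prints ∧
  ∀ u : ℕ → Bool, ∃ e : M₁.Rounds u ≃o M₂.Rounds u,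
    (∀ t : M₁.Rounds u, M₁.out u t.val = M₂.out u (e t).val) ∧
    ∀ t : M₁.Rounds u, (e t).val ≤ t.val ∧ t.val ≤ D * (e t).val

/-! ### Substitution calculus (SC) -/

/-- Formulas of substitution calculus SC, over proposition symbols and schema variables
indexed by `ℕ`. -/
inductive SForm where
  | tru : SForm
  | prop : ℕ → SForm
  | var : ℕ → SForm
  | not : SForm → SForm
  | and : SForm → SForm → SForm

namespace SForm

/-- Truth value under a valuation `M` of the propositions and `g` of the variables. -/
def eval (M : ℕ → Bool) (g : ℕ → Bool) : SForm → Bool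
  | tru => true
  | prop i => M i
  | var x => g x
  | not φ => !(eval M g φ)
  | and φ ψ => eval M g φ && eval M g ψ

/-- Number of occurrences of `⊤`, propositions, variables, `¬` and `∧`. -/
def size : SForm → ℕ
  | tru => 1
  | prop _ => 1
  | var _ => 1
  | not φ => size φ + 1
  | and φ ψ => size φ + size ψ + 1

/-- The set of proposition symbols occurring in a formula. -/
def props : SForm → Finset ℕ
  | tru => ∅
  | prop i => {i}
  | var _ => ∅
  | not φ => props φ
  | and φ ψ => props φ ∪ props ψ

/-- The set of schema variables occurring in a formula. -/
def vars : SForm → Finset ℕ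
  | tru => ∅
  | prop _ => ∅
  | var x => {x}
  | not φ => vars φ
  | and φ ψ => vars φ ∪ vars ψ

end SForm

/-- A `(Π, T)`-program of substitution calculus SC: for each schema variable in `T` a
terminal clause (a propositional formula over `Props`) and an iteration clause (a formula
over `Props` and `T`), together with print and attention predicates. -/
structure SC where
  Props : Finset ℕ
  T : Finset ℕ
  term : ℕ → SForm
  iter : ℕ → SForm
  hterm_vars : ∀ X ∈ T, (term X).vars = ∅
  hterm_props : ∀ X ∈ T, (term X).props ⊆ Props
  hiter_vars : ∀ X ∈ T, (iter X).vars ⊆ T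
  hiter_props : ∀ X ∈ T, (iter X).props ⊆ Props
  Pr : Finset ℕ
  hPr : Pr ⊆ T
  At : Finset ℕ
  hAt : At ⊆ T

namespace SC

/-- The proposition symbols that appear in the program. -/
def usedProps (Λ : SC) : Finset ℕ :=
  Λ.T.sup fun X => (Λ.term X).props ∪ (Λ.iter X).props

/-- Configurations on the model induced by the input bit string `u` (assigned to the
propositions appearing in the program, in increasing order). -/
def conf (Λ : SC) (u : ℕ → Bool) : ℕ → ℕ → Bool
  | 0 => fun X => (Λ.term X).eval (inputVal Λ.usedProps u) fun _ => false
  | t + 1 => fun X => (Λ.iter X).eval (inputVal Λ.usedProps u) (Λ.conf u t)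

/-- The global configuration string at round `t`. -/
def confStr (Λ : SC) (u : ℕ → Bool) (t : ℕ) : List Bool :=
  (Λ.T.sort (· ≤ ·)).map (Λ.conf u t)

/-- Round `t` is an output round iff some attention predicate is true at round `t`. -/
def attn (Λ : SC) (u : ℕ → Bool) (t : ℕ) : Prop :=
  ∃ X ∈ Λ.At, Λ.conf u t X = true

/-- The print string at round `t`. -/
def out (Λ : SC) (u : ℕ → Bool) (t : ℕ) : List Bool :=
  (Λ.Pr.sort (· ≤ ·)).map (Λ.conf u t)

/-- The size of an SC-program. -/
def size (Λ : SC) : ℕ :=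
  ∑ X ∈ Λ.T, ((Λ.term X).size + (Λ.iter X).size)

/-- The machine determined by an SC-program. -/
def toM (Λ : SC) : Machine :=
  ⟨Λ.usedProps.card, Λ.Pr.card, Λ.confStr, Λ.attn, Λ.out⟩

/-- Pointwise transient time: the least `t` such that `g_t = g_{t+c}` on `T` for some `c ≥ 1`. -/
noncomputable def transientAt (Λ : SC) (u : ℕ → Bool) : ℕ :=
  sInf {t | ∃ c, 1 ≤ c ∧ ∀ X ∈ Λ.T, Λ.conf u (t + c) X = Λ.conf u t X}

/-- The transient time of a program: the maximum of its pointwise transient times. -/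
def HasTransientTime (Λ : SC) (n : ℕ) : Prop :=
  (∀ u, Λ.transientAt u ≤ n) ∧ ∃ u, Λ.transientAt u = n

end SC

/-! The SC-program simulates the BNL-program verbatim: each input predicate `X` reads the
proposition symbol `X` in its terminal clause, every other terminal value becomes `⊤` or `¬⊤`,
and the iteration clauses are copied. The configurations then coincide round by round, and the
size grows only by the at most two symbols of each terminal clause. -/

namespace BForm

def toS : BForm → SForm
  | tru => .tru
  | var x => .var x
  | not φ => .not φ.toS
  | and φ ψ => .and φ.toS ψ.toS

@[simp]
lemma eval_toS (M g : ℕ → Bool) (φ : BForm) : φ.toS.eval M g = φ.eval g := by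
  induction φ <;> simp [toS, eval, SForm.eval, *]

@[simp]
lemma props_toS (φ : BForm) : φ.toS.props = ∅ := by
  induction φ <;> simp [toS, SForm.props, *]

@[simp]
lemma vars_toS (φ : BForm) : φ.toS.vars = φ.vars := by
  induction φ <;> simp [toS, SForm.vars, vars, *]

@[simp]
lemma size_toS (φ : BForm) : φ.toS.size = φ.size := by
  induction φ <;> simp [toS, SForm.size, size, *]

lemma one_le_size (φ : BForm) : 1 ≤ φ.size := by
  cases φ <;> simp [size]

lemma eval_congr {g g' : ℕ → Bool} (φ : BForm) (h : ∀ x ∈ φ.vars, g x = g' x) :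
    φ.eval g = φ.eval g' := by
  induction φ with
  | tru => rfl
  | var x => exact h x (by simp [vars])
  | not φ ih => simp [eval, ih fun x hx => h x (by simpa [vars] using hx)]
  | and φ ψ ih₁ ih₂ =>
    simp only [eval, ih₁ fun x hx => h x (by simp [vars, hx]),
      ih₂ fun x hx => h x (by simp [vars, hx])]

end BForm

namespace SForm

def ofBool : Bool → SForm
  | true => tru
  | false => not tru

@[simp]
lemma eval_ofBool (M g : ℕ → Bool) (b : Bool) : (ofBool b).eval M g = b := by
  cases b <;> rfl

@[simp]
lemma vars_ofBool (b : Bool) : (ofBool b).vars = ∅ := by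
  cases b <;> rfl

@[simp]
lemma props_ofBool (b : Bool) : (ofBool b).props = ∅ := by
  cases b <;> rfl

lemma size_ofBool_le (b : Bool) : (ofBool b).size ≤ 2 := by
  cases b <;> simp [ofBool, size]

end SForm

lemma globalEquiv_of_agree (M₁ M₂ : Machine) (hins : M₁.ins = M₂.ins)
    (hprints : M₁.prints = M₂.prints) (hconf : M₁.conf = M₂.conf)
    (hattn : ∀ u t, M₁.attn u t ↔ M₂.attn u t) (hout : M₁.out = M₂.out) :
    GlobalEquiv M₁ M₂ :=
  ⟨⟨hins, hprints, fun u =>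
      ⟨OrderIso.setCongr {t | M₁.attn u t} {t | M₂.attn u t} (Set.ext (hattn u)),
        fun t => by rw [hout]; rfl⟩⟩,
    fun u t => ⟨by rw [hconf], hattn u t⟩⟩

namespace BNL

variable (Λ : BNL)

def termS (X : ℕ) : SForm :=
  if X ∈ Λ.I then .prop X else .ofBool (Λ.term X)

lemma vars_termS (X : ℕ) : (Λ.termS X).vars = ∅ := by
  unfold termS; split_ifs <;> simp [SForm.vars]

lemma mem_props_termS {X Y : ℕ} : Y ∈ (Λ.termS X).props ↔ X ∈ Λ.I ∧ Y = X := by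
  unfold termS; split_ifs with h <;> simp [SForm.props, h]

lemma size_termS_le (X : ℕ) : (Λ.termS X).size ≤ 2 := by
  unfold termS; split_ifs
  · simp [SForm.size]
  · exact SForm.size_ofBool_le _

def toSC : SC where
  Props := Λ.I
  T := Λ.T
  term := Λ.termS
  iter X := (Λ.iter X).toS
  hterm_vars X _ := Λ.vars_termS X
  hterm_props X _ Y hY := ((Λ.mem_props_termS).1 hY).2 ▸ ((Λ.mem_props_termS).1 hY).1
  hiter_vars X hX := by simpa using Λ.hiter X hX
  hiter_props X _ := by simp
  Pr := Λ.Pr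
  hPr := Λ.hPr
  At := Λ.At
  hAt := Λ.hAt

lemma usedProps_toSC : Λ.toSC.usedProps = Λ.I := by
  ext Y
  simp only [SC.usedProps, toSC, Finset.mem_sup, Finset.mem_union, mem_props_termS,
    BForm.props_toS, Finset.notMem_empty, or_false]
  exact ⟨fun ⟨X, _, hXI, hYX⟩ => hYX ▸ hXI, fun hY => ⟨Y, Λ.hIT hY, hY, rfl⟩⟩

lemma conf_toSC (u : ℕ → Bool) (t : ℕ) {X : ℕ} (hX : X ∈ Λ.T) :
    Λ.toSC.conf u t X = Λ.conf u t X := by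
  induction t generalizing X with
  | zero =>
    simp only [SC.conf, BNL.conf, usedProps_toSC]
    simp only [toSC, termS]
    split_ifs <;> simp [SForm.eval]
  | succ t ih =>
    simp only [SC.conf, BNL.conf, toSC, BForm.eval_toS]
    exact BForm.eval_congr _ fun Y hY => ih (Λ.hiter X hX hY)

lemma map_conf_toSC (u : ℕ → Bool) (t : ℕ) {S : Finset ℕ} (hS : S ⊆ Λ.T) :
    (S.sort (· ≤ ·)).map (Λ.toSC.conf u t) = (S.sort (· ≤ ·)).map (Λ.conf u t) :=
  List.map_congr_left fun _ hX => Λ.conf_toSC u t (hS (by simpa using hX))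

lemma globalEquiv_toSC : GlobalEquiv Λ.toSC.toM Λ.toM := by
  refine globalEquiv_of_agree _ _ (by simp [SC.toM, BNL.toM, usedProps_toSC]) rfl ?_ ?_ ?_
  · funext u t
    exact Λ.map_conf_toSC u t subset_rfl
  · intro u t
    exact exists_congr fun X => and_congr_right fun hX => by
      rw [show Λ.toSC.conf u t X = Λ.conf u t X from Λ.conf_toSC u t (Λ.hAt hX)]
  · funext u t
    exact Λ.map_conf_toSC u t Λ.hPr

-- A terminal clause has size at most `2 ≤ 2 * (size of its iteration clause)`, whence `C = 3`.
lemma size_toSC_le : Λ.toSC.size ≤ 3 * Λ.size := by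
  have hsum : Λ.toSC.size ≤ 3 * ∑ X ∈ Λ.T, (Λ.iter X).size := by
    rw [Finset.mul_sum]
    refine Finset.sum_le_sum fun X _ => ?_
    have := Λ.size_termS_le X
    have := (Λ.iter X).one_le_size
    simp only [toSC, BForm.size_toS]
    omega
  unfold BNL.size
  omega

end BNL

/-- Every BNL-program with `ℓ` input predicates and size `s` has a globally
equivalent SC-program over the same set of schema variables, with `|Π| ≥ ℓ` proposition
symbols and size at most `C·s`. -/
theorem bnl_to_sc :
    ∃ C : ℕ, ∀ Λ : BNL, ∃ Λ' : SC,
      Λ.I.card ≤ Λ'.Props.card ∧ Λ'.T = Λ.T ∧ GlobalEquiv Λ'.toM Λ.toM ∧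
      Λ'.size ≤ C * Λ.size :=
  ⟨3, fun Λ => ⟨Λ.toSC, le_rfl, rfl, Λ.globalEquiv_toSC, Λ.size_toSC_le⟩⟩
end

section
/- There is a constant C such that for every base β ≥ 2 and every p ≥ 1 there exists a halting BNL-program of size at most C·(p·β² + p²) and computation time 2 that simulates the comparison function cmp : Z(p,β)² → Z(1,β), where cmp(x,y) = +1 if the integer denoted by x is strictly greater than the integer denoted by y, and cmp(x,y) = +0 otherwise. -/
/-! ### Halting programs and one-hot integer arithmetic -/

namespace BNL

/-- The configuration at round `t` is a fixed point. -/
def IsFixedAt (Λ : BNL) (u : ℕ → Bool) (t : ℕ) : Prop :=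
  ∀ X ∈ Λ.T, Λ.conf u (t + 1) X = Λ.conf u t X

/-- A halting BNL-program: on every input a fixed point is reached, and the output rounds
are exactly the rounds at which the configuration is a fixed point. -/
def Halting (Λ : BNL) : Prop :=
  ∀ u, (∃ t, Λ.IsFixedAt u t) ∧ ∀ t, (Λ.attn u t ↔ Λ.IsFixedAt u t)

/-- The least round at which the configuration is a fixed point. -/
noncomputable def haltTime (Λ : BNL) (u : ℕ → Bool) : ℕ :=
  sInf {t | Λ.IsFixedAt u t}

/-- The output of a halting program on input `u`: the print string at the fixed point. -/
noncomputable def output (Λ : BNL) (u : ℕ → Bool) : List Bool :=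
  Λ.out u (Λ.haltTime u)

/-- The computation time of a halting program is at most `n`. -/
def CompTimeLE (Λ : BNL) (n : ℕ) : Prop := ∀ u, Λ.haltTime u ≤ n

/-- The computation time of a halting program is exactly `n` (maximum over all inputs). -/
def HasCompTime (Λ : BNL) (n : ℕ) : Prop :=
  (∀ u, Λ.haltTime u ≤ n) ∧ ∃ u, Λ.haltTime u = n

end BNL

/-- One-hot encoding of the digit `b` as a block of `β` bits. -/
def digitOneHot (β b : ℕ) : List Bool := List.ofFn fun j : Fin β => decide (j.val = b)

/-- One-hot representation of a signed `p`-digit base-`β` integer: a sign bit followed by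
one block per digit, most significant digit first. -/
def intOneHot (β p : ℕ) (s : Bool) (b : Fin p → ℕ) : List Bool :=
  s :: (List.ofFn fun i : Fin p => digitOneHot β (b i)).flatten

/-- The integer `±b₁⋯b_p` in base `β` (most significant digit first; `s = true` means `+`). -/
def intVal (β p : ℕ) (s : Bool) (b : Fin p → ℕ) : ℤ :=
  (cond s 1 (-1)) * ∑ i : Fin p, (b i : ℤ) * (β : ℤ) ^ (p - 1 - i.val)

/-- The most-significant-first base-`β` digit sequence of length `len` of `n`. -/
def natDigits (β len n : ℕ) (i : Fin len) : ℕ := n / β ^ (len - 1 - i.val) % β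

/-- `u` agrees with the bit string `w` on the positions of `w`. -/
def Agrees (u : ℕ → Bool) (w : List Bool) : Prop :=
  ∀ j, j < w.length → u j = w.getD j false


/-!
The program works in two rounds. In round 1, for every digit position `i`, three variables record
whether the `i`-th digits of `x` and `y` are equal, or which of them is larger; on one-hot codes
each is a disjunction over (pairs of) input bits, of size `O(β²)`. In round 2 the result is read
off the two signs and the lexicographic comparison of the digit strings (the first differing digit
decides), a formula of size `O(p²)`, together with a test whether both magnitudes vanish, since
`+0` and `-0` denote the same integer. Apart from the latched inputs, every variable reads only
variables of smaller rank (inputs `0`, round-1 variables `1`, the rest `2`), so the configuration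
is fixed from round 2 on, and a clock variable that turns true exactly at round 2 serves as the
attention predicate.
-/

namespace BForm

def fls : BForm := not tru

def or (φ ψ : BForm) : BForm := not (and (not φ) (not ψ))

def any (l : List BForm) : BForm := l.foldr or fls

def all (l : List BForm) : BForm := l.foldr and tru

section Eval

variable (g : ℕ → Bool)

@[simp] lemma eval_tru : tru.eval g = true := rfl

@[simp] lemma eval_var (x : ℕ) : (var x).eval g = g x := rfl

@[simp] lemma eval_not (φ : BForm) : (not φ).eval g = !φ.eval g := rfl

@[simp] lemma eval_and (φ ψ : BForm) : (and φ ψ).eval g = (φ.eval g && ψ.eval g) := rfl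

@[simp] lemma eval_fls : fls.eval g = false := rfl

@[simp] lemma eval_or (φ ψ : BForm) : (or φ ψ).eval g = (φ.eval g || ψ.eval g) := by
  simp [or]

@[simp] lemma eval_any (l : List BForm) : (any l).eval g = true ↔ ∃ φ ∈ l, φ.eval g = true := by
  induction l with
  | nil => simp [any]
  | cons φ l ih => simp [any, ← ih]

@[simp] lemma eval_all (l : List BForm) : (all l).eval g = true ↔ ∀ φ ∈ l, φ.eval g = true := by
  induction l with
  | nil => simp [all]
  | cons φ l ih => simp [all, ← ih]

end Eval

@[simp] lemma vars_fls : fls.vars = ∅ := rfl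

@[simp] lemma mem_vars_any {x : ℕ} {l : List BForm} : x ∈ (any l).vars ↔ ∃ φ ∈ l, x ∈ φ.vars := by
  induction l with
  | nil => simp [any]
  | cons φ l ih => simp [any, or, vars, ← ih]

@[simp] lemma mem_vars_all {x : ℕ} {l : List BForm} : x ∈ (all l).vars ↔ ∃ φ ∈ l, x ∈ φ.vars := by
  induction l with
  | nil => simp [all, vars]
  | cons φ l ih => simp [all, vars, ← ih]

lemma size_any_le (l : List BForm) (c : ℕ) (h : ∀ φ ∈ l, φ.size ≤ c) :
    (any l).size ≤ (c + 4) * l.length + 2 := by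
  induction l with
  | nil => simp [any, fls, size]
  | cons φ l ih =>
    have := h φ (List.mem_cons_self ..)
    have := ih fun ψ hψ => h ψ (List.mem_cons_of_mem _ hψ)
    simp only [any, List.foldr_cons, or, size, List.length_cons] at *
    linarith

lemma size_all_le (l : List BForm) (c : ℕ) (h : ∀ φ ∈ l, φ.size ≤ c) :
    (all l).size ≤ (c + 1) * l.length + 1 := by
  induction l with
  | nil => simp [all, size]
  | cons φ l ih =>
    have := h φ (List.mem_cons_self ..)
    have := ih fun ψ hψ => h ψ (List.mem_cons_of_mem _ hψ)
    simp only [all, List.foldr_cons, size, List.length_cons] at *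
    linarith

end BForm

def OneHotAt (v : ℕ → Bool) (β : ℕ) (a : ℕ → ℕ) (x : ℕ) : Prop :=
  ∀ d < β, (v (a d) = true ↔ d = x)

namespace BForm

def oneHotEq (β : ℕ) (a b : ℕ → ℕ) : BForm :=
  any ((List.range β).map fun d => and (var (a d)) (var (b d)))

def oneHotGt (β : ℕ) (a b : ℕ → ℕ) : BForm :=
  any ((List.range β).map fun d => and (var (a d)) (any ((List.range d).map fun d' => var (b d'))))

def lexGt (p : ℕ) (g e : ℕ → ℕ) : BForm :=
  any ((List.range p).map fun i => and (var (g i)) (all ((List.range i).map fun j => var (e j))))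

section OneHot

variable {v : ℕ → Bool} {β x y : ℕ} {a b : ℕ → ℕ}

lemma eval_oneHotEq (ha : OneHotAt v β a x) (hb : OneHotAt v β b y) (hx : x < β) :
    (oneHotEq β a b).eval v = true ↔ x = y := by
  simp only [oneHotEq, eval_any, List.mem_map, List.mem_range, exists_exists_and_eq_and,
    eval_and, eval_var, Bool.and_eq_true]
  constructor
  · rintro ⟨d, hd, hxd, hyd⟩
    rw [← (ha d hd).1 hxd, (hb d hd).1 hyd]
  · rintro rfl
    exact ⟨x, hx, (ha x hx).2 rfl, (hb x hx).2 rfl⟩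

lemma eval_oneHotGt (ha : OneHotAt v β a x) (hb : OneHotAt v β b y) (hx : x < β) :
    (oneHotGt β a b).eval v = true ↔ y < x := by
  have inner : ∀ d < β, (∃ d' < d, v (b d') = true) ↔ y < d := fun d hd =>
    ⟨fun ⟨d', hd', h⟩ => (hb d' (by omega)).1 h ▸ hd', fun h => ⟨y, h, (hb y (by omega)).2 rfl⟩⟩
  simp only [oneHotGt, eval_any, List.mem_map, List.mem_range, exists_exists_and_eq_and,
    eval_and, eval_var, Bool.and_eq_true]
  constructor
  · rintro ⟨d, hd, hxd, hyd⟩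
    rw [← (ha d hd).1 hxd, ← inner d hd]
    simpa using hyd
  · intro hyx
    refine ⟨x, hx, (ha x hx).2 rfl, ?_⟩
    simpa using (inner x hx).2 hyx

end OneHot

lemma eval_lexGt {v : ℕ → Bool} {p : ℕ} {g e : ℕ → ℕ} {G E : ℕ → Prop}
    (hg : ∀ i < p, (v (g i) = true ↔ G i)) (he : ∀ i < p, (v (e i) = true ↔ E i)) :
    (lexGt p g e).eval v = true ↔ ∃ i < p, G i ∧ ∀ j < i, E j := by
  simp only [lexGt, eval_any, List.mem_map, List.mem_range, exists_exists_and_eq_and, eval_and,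
    eval_var, Bool.and_eq_true, eval_all, forall_exists_index, and_imp, forall_apply_eq_imp_iff₂]
  refine exists_congr fun i => ⟨fun ⟨hi, hG, hE⟩ => ⟨hi, ?_, ?_⟩, fun ⟨hi, hG, hE⟩ => ⟨hi, ?_, ?_⟩⟩
  · exact (hg i hi).1 hG
  · exact fun j hj => (he j (by omega)).1 (hE j hj)
  · exact (hg i hi).2 hG
  · exact fun j hj => (he j (by omega)).2 (hE j hj)

lemma mem_vars_oneHotEq {β x : ℕ} {a b : ℕ → ℕ} (hx : x ∈ (oneHotEq β a b).vars) :
    ∃ d < β, x = a d ∨ x = b d := by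
  simpa [oneHotEq, vars] using hx

lemma mem_vars_oneHotGt {β x : ℕ} {a b : ℕ → ℕ} (hx : x ∈ (oneHotGt β a b).vars) :
    ∃ d < β, x = a d ∨ x = b d := by
  simp only [oneHotGt, mem_vars_any, List.mem_map, List.mem_range, exists_exists_and_eq_and,
    vars, Finset.mem_union, Finset.mem_singleton] at hx
  obtain ⟨d, hd, rfl | ⟨d', hd', rfl⟩⟩ := hx
  · exact ⟨d, hd, .inl rfl⟩
  · exact ⟨d', by omega, .inr rfl⟩

lemma mem_vars_lexGt {p x : ℕ} {g e : ℕ → ℕ} (hx : x ∈ (lexGt p g e).vars) :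
    ∃ i < p, x = g i ∨ x = e i := by
  simp only [lexGt, mem_vars_any, mem_vars_all, List.mem_map, List.mem_range,
    exists_exists_and_eq_and, vars, Finset.mem_union, Finset.mem_singleton] at hx
  obtain ⟨i, hi, rfl | ⟨j, hj, rfl⟩⟩ := hx
  · exact ⟨i, hi, .inl rfl⟩
  · exact ⟨j, by omega, .inr rfl⟩

lemma size_oneHotEq_le (β : ℕ) (a b : ℕ → ℕ) : (oneHotEq β a b).size ≤ 7 * β + 2 := by
  have := size_any_le ((List.range β).map fun d => and (var (a d)) (var (b d))) 3
    (by simp [size])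
  simpa [oneHotEq] using this

lemma size_oneHotGt_le (β : ℕ) (a b : ℕ → ℕ) : (oneHotGt β a b).size ≤ 13 * β ^ 2 + 2 := by
  have hinner : ∀ d < β, (any ((List.range d).map fun d' => var (b d'))).size ≤ 5 * β + 2 :=
    fun d hd => (size_any_le _ 1 (by simp [size])).trans (by simp; omega)
  have := size_any_le ((List.range β).map fun d =>
    and (var (a d)) (any ((List.range d).map fun d' => var (b d')))) (5 * β + 4)
    (by simp only [List.mem_map, List.mem_range, forall_exists_index, and_imp,
      forall_apply_eq_imp_iff₂, size]; intro d hd; have := hinner d hd; omega)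
  simp only [List.length_map, List.length_range] at this
  rw [oneHotGt]
  nlinarith [Nat.le_self_pow two_ne_zero β]

lemma size_lexGt_le (p : ℕ) (g e : ℕ → ℕ) : (lexGt p g e).size ≤ 9 * p ^ 2 + 2 := by
  have hinner : ∀ i < p, (all ((List.range i).map fun j => var (e j))).size ≤ 2 * p + 1 :=
    fun i hi => (size_all_le _ 1 (by simp [size])).trans (by simp; omega)
  have := size_any_le ((List.range p).map fun i =>
    and (var (g i)) (all ((List.range i).map fun j => var (e j)))) (2 * p + 3)
    (by simp only [List.mem_map, List.mem_range, forall_exists_index, and_imp,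
      forall_apply_eq_imp_iff₂, size]; intro i hi; have := hinner i hi; omega)
  simp only [List.length_map, List.length_range] at this
  rw [lexGt]
  nlinarith [Nat.le_self_pow two_ne_zero p]

end BForm

lemma mul_add_lt_mul_add_iff {β x y r r' : ℕ} (hr : r < β) (hr' : r' < β) :
    β * x + r < β * y + r' ↔ x < y ∨ x = y ∧ r < r' := by
  constructor
  · intro h
    rcases lt_trichotomy x y with hxy | rfl | hxy
    · exact .inl hxy
    · exact .inr ⟨rfl, by omega⟩
    · nlinarith
  · rintro (hxy | ⟨rfl, h⟩)
    · nlinarith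
    · omega

lemma mul_add_eq_mul_add_iff {β x y r r' : ℕ} (hr : r < β) (hr' : r' < β) :
    β * x + r = β * y + r' ↔ x = y ∧ r = r' := by
  refine ⟨fun h => ?_, fun ⟨hxy, hrr'⟩ => hxy ▸ hrr' ▸ rfl⟩
  have h₁ := (mul_add_lt_mul_add_iff hr hr').not.1 h.not_lt
  have h₂ := (mul_add_lt_mul_add_iff hr' hr).not.1 h.symm.not_lt
  omega

def digitsVal (β p : ℕ) (a : ℕ → ℕ) : ℕ := ∑ j ∈ Finset.range p, a j * β ^ (p - 1 - j)

lemma digitsVal_succ (β p : ℕ) (a : ℕ → ℕ) :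
    digitsVal β (p + 1) a = β * digitsVal β p a + a p := by
  rw [digitsVal, Finset.sum_range_succ, digitsVal, Finset.mul_sum,
    show p + 1 - 1 - p = 0 by omega, pow_zero, mul_one]
  congr 1
  refine Finset.sum_congr rfl fun j hj => ?_
  rw [show p + 1 - 1 - j = p - 1 - j + 1 by simp at hj; omega, pow_succ]
  ring

lemma digitsVal_lt_iff_and_eq_iff {β p : ℕ} {a b : ℕ → ℕ} (ha : ∀ j < p, a j < β)
    (hb : ∀ j < p, b j < β) :
    (digitsVal β p a < digitsVal β p b ↔ ∃ i < p, a i < b i ∧ ∀ j < i, a j = b j) ∧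
      (digitsVal β p a = digitsVal β p b ↔ ∀ j < p, a j = b j) := by
  induction p with
  | zero => simp [digitsVal]
  | succ p ih =>
    obtain ⟨ih_lt, ih_eq⟩ := ih (fun j hj => ha j (by omega)) (fun j hj => hb j (by omega))
    rw [digitsVal_succ, digitsVal_succ, mul_add_lt_mul_add_iff (ha p p.lt_succ_self)
      (hb p p.lt_succ_self), mul_add_eq_mul_add_iff (ha p p.lt_succ_self) (hb p p.lt_succ_self),
      ih_lt, ih_eq, Nat.exists_lt_succ_right, Nat.forall_lt_succ_right]
    exact ⟨or_congr_right and_comm, Iff.rfl⟩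

lemma digitsVal_lt_iff {β p : ℕ} {a b : ℕ → ℕ} (ha : ∀ j < p, a j < β) (hb : ∀ j < p, b j < β) :
    digitsVal β p a < digitsVal β p b ↔ ∃ i < p, a i < b i ∧ ∀ j < i, a j = b j :=
  (digitsVal_lt_iff_and_eq_iff ha hb).1

lemma digitsVal_eq_zero_iff {β p : ℕ} {a : ℕ → ℕ} (ha : ∀ j < p, a j < β) :
    digitsVal β p a = 0 ↔ ∀ j < p, a j = 0 := by
  simpa [digitsVal] using (digitsVal_lt_iff_and_eq_iff (b := 0) ha fun j hj => by
    simpa using (Nat.zero_le _).trans_lt (ha j hj)).2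

lemma intVal_eq_digitsVal (β p : ℕ) (s : Bool) (b : Fin p → ℕ) :
    intVal β p s b = cond s 1 (-1) * (digitsVal β p (Function.extend Fin.val b 0) : ℤ) := by
  rw [intVal, digitsVal, ← Fin.sum_univ_eq_sum_range]
  push_cast
  simp [Fin.val_injective.extend_apply]

lemma signed_lt_signed_iff (s₁ s₂ : Bool) (m₁ m₂ : ℕ) :
    cond s₂ 1 (-1) * (m₂ : ℤ) < cond s₁ 1 (-1) * m₁ ↔
      (s₁ = true ∧ s₂ = true ∧ m₂ < m₁) ∨ (s₁ = true ∧ s₂ = false ∧ ¬(m₁ = 0 ∧ m₂ = 0)) ∨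
        (s₁ = false ∧ s₂ = false ∧ m₁ < m₂) := by
  cases s₁ <;> cases s₂
  all_goals simp
  all_goals omega

namespace Agrees

variable {u : ℕ → Bool}

lemma append_left {w₁ w₂ : List Bool} (h : Agrees u (w₁ ++ w₂)) : Agrees u w₁ := fun j hj => by
  rw [h j (by simp; omega), List.getD_append _ _ _ _ hj]

lemma append_right {w₁ w₂ : List Bool} (h : Agrees u (w₁ ++ w₂)) :
    Agrees (fun j => u (w₁.length + j)) w₂ := fun j hj => by
  dsimp only
  rw [h _ (by simp; omega), List.getD_append_right _ _ _ _ (by omega), Nat.add_sub_cancel_left]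

lemma head {a : Bool} {w : List Bool} (h : Agrees u (a :: w)) : u 0 = a :=
  h 0 (by simp)

lemma tail {a : Bool} {w : List Bool} (h : Agrees u (a :: w)) : Agrees (fun j => u (j + 1)) w :=
  fun j hj => h (j + 1) (by simp; omega)

lemma flatten {β : ℕ} {l : List (List Bool)} (h : Agrees u l.flatten)
    (hl : ∀ w ∈ l, w.length = β) (i : ℕ) (hi : i < l.length) :
    Agrees (fun j => u (i * β + j)) l[i] := by
  induction l generalizing u i with
  | nil => simp at hi
  | cons w l ih =>
    rw [List.flatten_cons] at h
    cases i with
    | zero => simpa using h.append_left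
    | succ i =>
      have := ih h.append_right (fun w hw => hl w (List.mem_cons_of_mem _ hw)) i (by simpa using hi)
      rw [hl w List.mem_cons_self] at this
      simpa [add_mul, add_assoc, add_comm, add_left_comm] using this

lemma oneHotAt {β x : ℕ} {a : ℕ → ℕ} (h : Agrees (fun d => u (a d)) (digitOneHot β x)) :
    OneHotAt u β a x := fun d hd => by
  rw [show u (a d) = _ from h d (by simpa [digitOneHot] using hd)]
  simp [digitOneHot, hd]

lemma intOneHot {β p : ℕ} {s : Bool} {b : Fin p → ℕ} (h : Agrees u (intOneHot β p s b)) :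
    u 0 = s ∧ ∀ i (hi : i < p), OneHotAt u β (fun d => 1 + i * β + d) (b ⟨i, hi⟩) := by
  refine ⟨h.head, fun i hi => oneHotAt ?_⟩
  have := h.tail.flatten (β := β) (by simp [digitOneHot]) i (by simpa using hi)
  convert this using 3
  · omega
  · simp

end Agrees

namespace BNL

variable (Λ : BNL) {u : ℕ → Bool}

lemma conf_succ (u : ℕ → Bool) (t X : ℕ) :
    Λ.conf u (t + 1) X = (Λ.iter X).eval (Λ.conf u t) := rfl

lemma conf_zero_of_lt {n X : ℕ} (hI : Λ.I = Finset.range n) (hX : X < n) :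
    Λ.conf u 0 X = u X := by
  have hidx : (List.range n).idxOf X = X := by
    have := List.nodup_range.idxOf_getElem X (by simpa using hX)
    rwa [List.getElem_range] at this
  simp [conf, inputVal, hI, hX, hidx]

lemma conf_zero_of_notMem {X : ℕ} (hX : X ∉ Λ.I) : Λ.conf u 0 X = Λ.term X := by
  simp [conf, hX]

lemma conf_eq_conf_zero_of_iter_eq_var {X : ℕ} (hX : Λ.iter X = .var X) (t : ℕ) :
    Λ.conf u t X = Λ.conf u 0 X := by
  induction t with
  | zero => rfl
  | succ t ih => rw [conf_succ, hX, BForm.eval_var, ih]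

variable {Λ}

lemma IsFixedAt.succ {t : ℕ} (h : Λ.IsFixedAt u t) : Λ.IsFixedAt u (t + 1) := fun X hX =>
  BForm.eval_congr _ fun Y hY => h Y (Λ.hiter X hX hY)

lemma IsFixedAt.mono {s t : ℕ} (h : Λ.IsFixedAt u s) (hst : s ≤ t) : Λ.IsFixedAt u t := by
  induction t, hst using Nat.le_induction with
  | base => exact h
  | succ t _ ih => exact ih.succ

variable (Λ) in
/-- `0 < rank X` is required since even a clause without variables changes the value of `X` once,
away from its terminal value. -/
def IsLayered (rank : ℕ → ℕ) : Prop :=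
  ∀ X ∈ Λ.T, Λ.iter X = .var X ∨ 0 < rank X ∧ ∀ Y ∈ (Λ.iter X).vars, rank Y < rank X

theorem IsLayered.conf_succ_eq {rank : ℕ → ℕ} (hΛ : Λ.IsLayered rank) :
    ∀ X ∈ Λ.T, ∀ t, rank X ≤ t → Λ.conf u (t + 1) X = Λ.conf u t X := by
  intro X
  induction hr : rank X using Nat.strong_induction_on generalizing X with
  | _ r ih =>
    intro hX t ht
    rcases hΛ X hX with hvar | ⟨hpos, hlt⟩
    · rw [conf_succ, hvar, BForm.eval_var]
    · obtain ⟨s, rfl⟩ : ∃ s, t = s + 1 := ⟨t - 1, by omega⟩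
      refine BForm.eval_congr _ fun Y hY => ?_
      exact ih (rank Y) (hr ▸ hlt Y hY) Y rfl (Λ.hiter X hX hY) s (by have := hlt Y hY; omega)

theorem IsLayered.isFixedAt {rank : ℕ → ℕ} (hΛ : Λ.IsLayered rank) {k : ℕ}
    (hk : ∀ X ∈ Λ.T, rank X ≤ k) : Λ.IsFixedAt u k := fun X hX =>
  hΛ.conf_succ_eq X hX k (hk X hX)

lemma haltTime_eq_of_isFixedAt_iff {n : ℕ} (h : ∀ t, Λ.IsFixedAt u t ↔ n ≤ t) :
    Λ.haltTime u = n := by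
  rw [haltTime, show {t | Λ.IsFixedAt u t} = Set.Ici n from Set.ext h, csInf_Ici]

theorem halting_and_hasCompTime_of {n : ℕ} (hfix : ∀ u t, Λ.IsFixedAt u t ↔ n ≤ t)
    (hattn : ∀ u t, Λ.attn u t ↔ n ≤ t) : Λ.Halting ∧ Λ.HasCompTime n :=
  ⟨fun u => ⟨⟨n, (hfix u n).2 le_rfl⟩, fun t => (hattn u t).trans (hfix u t).symm⟩,
    fun u => (haltTime_eq_of_isFixedAt_iff (hfix u)).le,
    ⟨fun _ => false, haltTime_eq_of_isFixedAt_iff (hfix _)⟩⟩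

end BNL

namespace ComparisonProgram

open BForm

variable (β p : ℕ)

/-! The variables `0, …, 2 * codeLen β p - 1` are the inputs, with the sign bits of `x` and `y` at
`0` and `codeLen β p`. Round 1 computes `eqVar i`, `gtVar i`, `ltVar i`, comparing the `i`-th
digits; round 2 computes the outputs `outVar 0, …, outVar β` and the attention predicate
`clockVar`, which is true exactly from round 2 on. -/

def codeLen : ℕ := 1 + p * β

def xDigit (i d : ℕ) : ℕ := 1 + i * β + d

def yDigit (i d : ℕ) : ℕ := codeLen β p + xDigit β i d

def eqVar (i : ℕ) : ℕ := 2 * codeLen β p + i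

def gtVar (i : ℕ) : ℕ := eqVar β p p + i

def ltVar (i : ℕ) : ℕ := gtVar β p p + i

def startVar : ℕ := ltVar β p p

def clockVar : ℕ := startVar β p + 1

def outVar (d : ℕ) : ℕ := clockVar β p + 1 + d

def numVars : ℕ := outVar β p (β + 1)

def zeroForm : BForm :=
  all ((List.range p).map fun i => and (var (xDigit β i 0)) (var (yDigit β p i 0)))

def resultForm : BForm :=
  or (and (var 0) (and (var (codeLen β p)) (lexGt p (gtVar β p) (eqVar β p))))
    (or (and (var 0) (and (not (var (codeLen β p))) (not (zeroForm β p))))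
      (and (not (var 0)) (and (not (var (codeLen β p))) (lexGt p (ltVar β p) (eqVar β p)))))

def outClause (d : ℕ) : BForm :=
  if d = 0 then tru else if d = 1 then not (resultForm β p) else if d = 2 then resultForm β p
  else fls

def clause (X : ℕ) : BForm :=
  if X < 2 * codeLen β p then var X
  else if X < gtVar β p 0 then
    oneHotEq β (xDigit β (X - eqVar β p 0)) (yDigit β p (X - eqVar β p 0))
  else if X < ltVar β p 0 then
    oneHotGt β (xDigit β (X - gtVar β p 0)) (yDigit β p (X - gtVar β p 0))
  else if X < startVar β p then
    oneHotGt β (yDigit β p (X - ltVar β p 0)) (xDigit β (X - ltVar β p 0))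
  else if X = startVar β p then tru
  else if X = clockVar β p then var (startVar β p)
  else outClause β p (X - outVar β p 0)

variable {β p}

lemma clause_of_lt {X : ℕ} (hX : X < 2 * codeLen β p) : clause β p X = var X := by
  simp [clause, hX]

lemma clause_eqVar {i : ℕ} (hi : i < p) :
    clause β p (eqVar β p i) = oneHotEq β (xDigit β i) (yDigit β p i) := by
  simp [clause, eqVar, gtVar, hi]

lemma clause_gtVar {i : ℕ} (hi : i < p) :
    clause β p (gtVar β p i) = oneHotGt β (xDigit β i) (yDigit β p i) := by
  simp [clause, eqVar, gtVar, ltVar, hi, add_assoc, add_tsub_add_eq_tsub_left]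

lemma clause_ltVar {i : ℕ} (hi : i < p) :
    clause β p (ltVar β p i) = oneHotGt β (yDigit β p i) (xDigit β i) := by
  simp [clause, eqVar, gtVar, ltVar, startVar, hi, add_assoc, add_tsub_add_eq_tsub_left]

lemma clause_startVar : clause β p (startVar β p) = tru := by
  simp [clause, eqVar, gtVar, ltVar, startVar, add_assoc]

lemma clause_clockVar : clause β p (clockVar β p) = var (startVar β p) := by
  simp [clause, eqVar, gtVar, ltVar, startVar, clockVar, add_assoc]

lemma clause_outVar (d : ℕ) : clause β p (outVar β p d) = outClause β p d := by
  simp [clause, eqVar, gtVar, ltVar, startVar, clockVar, outVar, add_assoc,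
    add_tsub_add_eq_tsub_left]
  omega

lemma xDigit_lt_codeLen {i d : ℕ} (hi : i < p) (hd : d < β) : xDigit β i d < codeLen β p := by
  have : (i + 1) * β ≤ p * β := Nat.mul_le_mul_right β hi
  simp only [xDigit, codeLen]
  linarith

lemma yDigit_lt {i d : ℕ} (hi : i < p) (hd : d < β) : yDigit β p i d < 2 * codeLen β p := by
  have := xDigit_lt_codeLen hi hd
  simp only [yDigit]
  omega

lemma xDigit_zero_le_codeLen {i : ℕ} (hi : i < p) : xDigit β i 0 ≤ codeLen β p := by
  have : i * β ≤ p * β := Nat.mul_le_mul_right β hi.le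
  simp only [xDigit, codeLen]
  omega

lemma mem_layer_cases {X : ℕ} (h₁ : 2 * codeLen β p ≤ X) (h₂ : X < clockVar β p) :
    (∃ i < p, X = eqVar β p i ∨ X = gtVar β p i ∨ X = ltVar β p i) ∨ X = startVar β p := by
  simp only [clockVar, startVar, ltVar, gtVar, eqVar] at *
  by_cases he : X < 2 * codeLen β p + p
  · exact .inl ⟨X - 2 * codeLen β p, by omega, .inl (by omega)⟩
  by_cases hg : X < 2 * codeLen β p + p + p
  · exact .inl ⟨X - (2 * codeLen β p + p), by omega, .inr (.inl (by omega))⟩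
  by_cases hl : X < 2 * codeLen β p + p + p + p
  · exact .inl ⟨X - (2 * codeLen β p + p + p), by omega, .inr (.inr (by omega))⟩
  exact .inr (by omega)

lemma lt_of_mem_vars_clause_layer {X Y : ℕ} (h₁ : 2 * codeLen β p ≤ X) (h₂ : X < clockVar β p)
    (hY : Y ∈ (clause β p X).vars) : Y < 2 * codeLen β p := by
  have hdigit : ∀ i < p, ∀ d < β, Y = xDigit β i d ∨ Y = yDigit β p i d → Y < 2 * codeLen β p := by
    rintro i hi d hd (rfl | rfl)
    · have := xDigit_lt_codeLen hi hd; omega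
    · exact yDigit_lt hi hd
  rcases mem_layer_cases h₁ h₂ with ⟨i, hi, rfl | rfl | rfl⟩ | rfl
  · rw [clause_eqVar hi] at hY
    obtain ⟨d, hd, hY⟩ := mem_vars_oneHotEq hY
    exact hdigit i hi d hd hY
  · rw [clause_gtVar hi] at hY
    obtain ⟨d, hd, hY⟩ := mem_vars_oneHotGt hY
    exact hdigit i hi d hd hY
  · rw [clause_ltVar hi] at hY
    obtain ⟨d, hd, hY⟩ := mem_vars_oneHotGt hY
    exact hdigit i hi d hd hY.symm
  · simp [clause_startVar, vars] at hY

lemma lt_clockVar_of_mem_vars_resultForm {Y : ℕ} (hY : Y ∈ (resultForm β p).vars) :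
    Y < clockVar β p := by
  have hsign : 0 < clockVar β p ∧ codeLen β p < clockVar β p := by
    simp only [clockVar, startVar, ltVar, gtVar, eqVar]; omega
  have hlex : ∀ {g : ℕ → ℕ}, (∀ i < p, g i < clockVar β p) →
      Y ∈ (lexGt p g (eqVar β p)).vars → Y < clockVar β p := fun hg hY => by
    obtain ⟨i, hi, rfl | rfl⟩ := mem_vars_lexGt hY
    · exact hg i hi
    · simp only [clockVar, startVar, ltVar, gtVar, eqVar]; omega
  have hgt : ∀ i < p, gtVar β p i < clockVar β p := fun i hi => by
    simp only [clockVar, startVar, ltVar, gtVar, eqVar]; omega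
  have hlt : ∀ i < p, ltVar β p i < clockVar β p := fun i hi => by
    simp only [clockVar, startVar, ltVar, gtVar, eqVar]; omega
  have hzero : Y ∈ (zeroForm β p).vars → Y < clockVar β p := fun hY => by
    simp only [zeroForm, mem_vars_all, List.mem_map, List.mem_range, exists_exists_and_eq_and,
      vars, Finset.mem_union, Finset.mem_singleton] at hY
    obtain ⟨i, hi, rfl | rfl⟩ := hY
    all_goals
      have := xDigit_zero_le_codeLen (β := β) hi
      simp only [yDigit, clockVar, startVar, ltVar, gtVar, eqVar] at *
      omega
  simp only [resultForm, BForm.or, vars, Finset.mem_union, Finset.mem_singleton] at hY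
  rcases hY with ((rfl | rfl | hY) | (rfl | rfl | hY) | (rfl | rfl | hY))
  all_goals first | omega | exact hlex hgt hY | exact hzero hY | exact hlex hlt hY

lemma lt_clockVar_of_mem_vars_clause {X Y : ℕ} (h : clockVar β p ≤ X)
    (hY : Y ∈ (clause β p X).vars) : Y < clockVar β p := by
  obtain rfl | h := h.eq_or_lt
  · simp only [clause_clockVar, vars, Finset.mem_singleton] at hY
    simp [hY, clockVar]
  · obtain ⟨d, rfl⟩ : ∃ d, X = outVar β p d := ⟨X - outVar β p 0, by simp only [outVar]; omega⟩
    rw [clause_outVar, outClause] at hY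
    split_ifs at hY
    · simp [vars] at hY
    · exact lt_clockVar_of_mem_vars_resultForm hY
    · exact lt_clockVar_of_mem_vars_resultForm hY
    · simp at hY

variable (β p) in
def rank (X : ℕ) : ℕ := if X < 2 * codeLen β p then 0 else if X < clockVar β p then 1 else 2

lemma rank_le_two (X : ℕ) : rank β p X ≤ 2 := by
  unfold rank; split_ifs <;> omega

lemma clause_eq_var_or_rank_lt (X : ℕ) : clause β p X = var X ∨
    0 < rank β p X ∧ ∀ Y ∈ (clause β p X).vars, rank β p Y < rank β p X := by
  by_cases h₁ : X < 2 * codeLen β p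
  · exact .inl (clause_of_lt h₁)
  refine .inr ⟨by simp [rank, h₁]; split_ifs <;> omega, fun Y hY => ?_⟩
  by_cases h₂ : X < clockVar β p
  · simp [rank, h₁, h₂, lt_of_mem_vars_clause_layer (not_lt.1 h₁) h₂ hY]
  · have := lt_clockVar_of_mem_vars_clause (not_lt.1 h₂) hY
    simp only [rank, h₁, h₂, if_false]
    split_ifs <;> omega

lemma lt_clockVar_of_rank_lt_two {Y : ℕ} (h : rank β p Y < 2) : Y < clockVar β p := by
  have : 2 * codeLen β p < clockVar β p := by
    simp only [clockVar, startVar, ltVar, gtVar, eqVar]; omega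
  unfold rank at h
  split_ifs at h <;> omega

lemma lt_numVars_of_mem_vars_clause {X Y : ℕ} (hX : X < numVars β p)
    (hY : Y ∈ (clause β p X).vars) : Y < numVars β p := by
  rcases clause_eq_var_or_rank_lt X with h | ⟨-, h⟩
  · rw [h, vars, Finset.mem_singleton] at hY
    rwa [hY]
  · have := lt_clockVar_of_rank_lt_two ((h Y hY).trans_le (rank_le_two X))
    simp only [numVars, outVar]
    omega

variable (β p) in
def prog : BNL where
  T := Finset.range (numVars β p)
  I := Finset.range (2 * codeLen β p)
  hIT := Finset.range_subset_range.2 (by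
    simp only [numVars, outVar, clockVar, startVar, ltVar, gtVar, eqVar]; omega)
  term _ := false
  iter := clause β p
  hiter X hX Y hY := Finset.mem_range.2 (lt_numVars_of_mem_vars_clause (Finset.mem_range.1 hX) hY)
  Pr := (Finset.range (β + 1)).map (addLeftEmbedding (outVar β p 0))
  hPr := by
    intro X hX
    simp only [Finset.mem_map, Finset.mem_range, addLeftEmbedding_apply] at hX
    obtain ⟨d, hd, rfl⟩ := hX
    simp only [numVars, outVar, Finset.mem_range]
    omega
  At := {clockVar β p}
  hAt := by
    simp only [Finset.singleton_subset_iff, numVars, outVar, Finset.mem_range]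
    omega

lemma prog_isLayered : (prog β p).IsLayered (rank β p) := fun X _ => clause_eq_var_or_rank_lt X

variable {u v w : ℕ → Bool} {s₁ s₂ : Bool} {a b : ℕ → ℕ}

variable (β p) in
def Encodes (v : ℕ → Bool) (s₁ : Bool) (a : ℕ → ℕ) (s₂ : Bool) (b : ℕ → ℕ) : Prop :=
  v 0 = s₁ ∧ v (codeLen β p) = s₂ ∧
    ∀ i < p, OneHotAt v β (xDigit β i) (a i) ∧ OneHotAt v β (yDigit β p i) (b i)

lemma Encodes.congr (h : Encodes β p v s₁ a s₂ b) (hvw : ∀ X < 2 * codeLen β p, v X = w X) :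
    Encodes β p w s₁ a s₂ b := by
  obtain ⟨h₁, h₂, hdig⟩ := h
  have hpos : 0 < codeLen β p := by simp [codeLen]
  refine ⟨hvw 0 (by omega) ▸ h₁, hvw (codeLen β p) (by omega) ▸ h₂,
    fun i hi => ⟨fun d hd => ?_, fun d hd => ?_⟩⟩
  · have := xDigit_lt_codeLen hi hd
    rw [← hvw _ (by omega)]
    exact (hdig i hi).1 d hd
  · rw [← hvw _ (yDigit_lt hi hd)]
    exact (hdig i hi).2 d hd

lemma length_intOneHot (s : Bool) (b : Fin p → ℕ) : (intOneHot β p s b).length = codeLen β p := by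
  simp [intOneHot, digitOneHot, codeLen, List.sum_ofFn, add_comm]

lemma encodes_of_agrees {u : ℕ → Bool} {b₁ b₂ : Fin p → ℕ}
    (hu : Agrees u (intOneHot β p s₁ b₁ ++ intOneHot β p s₂ b₂)) :
    Encodes β p u s₁ (Function.extend Fin.val b₁ 0) s₂ (Function.extend Fin.val b₂ 0) := by
  obtain ⟨hs₁, hx⟩ := hu.append_left.intOneHot
  obtain ⟨hs₂, hy⟩ := hu.append_right.intOneHot
  rw [length_intOneHot] at hs₂ hy
  refine ⟨hs₁, by simpa using hs₂, fun i hi => ?_⟩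
  have hx : OneHotAt u β (xDigit β i) (b₁ ⟨i, hi⟩) := hx i hi
  have hy : OneHotAt u β (yDigit β p i) (b₂ ⟨i, hi⟩) := hy i hi
  rw [← Fin.val_injective.extend_apply b₁ 0 ⟨i, hi⟩] at hx
  rw [← Fin.val_injective.extend_apply b₂ 0 ⟨i, hi⟩] at hy
  exact ⟨hx, hy⟩

lemma eval_zeroForm (h : Encodes β p v s₁ a s₂ b) (ha : ∀ i < p, a i < β)
    (hb : ∀ i < p, b i < β) :
    (zeroForm β p).eval v = true ↔ digitsVal β p a = 0 ∧ digitsVal β p b = 0 := by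
  rw [digitsVal_eq_zero_iff ha, digitsVal_eq_zero_iff hb, ← forall₂_and]
  simp only [zeroForm, eval_all, List.mem_map, List.mem_range, forall_exists_index, and_imp,
    forall_apply_eq_imp_iff₂, eval_and, eval_var, Bool.and_eq_true]
  refine forall₂_congr fun i hi => ?_
  have hβ : 0 < β := (Nat.zero_le _).trans_lt (ha i hi)
  rw [(h.2.2 i hi).1 0 hβ, (h.2.2 i hi).2 0 hβ, eq_comm, @eq_comm _ 0 (b i)]

lemma eval_resultForm (h : Encodes β p v s₁ a s₂ b) (ha : ∀ i < p, a i < β)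
    (hb : ∀ i < p, b i < β) (he : ∀ i < p, (v (eqVar β p i) = true ↔ a i = b i))
    (hg : ∀ i < p, (v (gtVar β p i) = true ↔ b i < a i))
    (hl : ∀ i < p, (v (ltVar β p i) = true ↔ a i < b i)) :
    (resultForm β p).eval v = true ↔
      cond s₂ 1 (-1) * (digitsVal β p b : ℤ) < cond s₁ 1 (-1) * (digitsVal β p a : ℤ) := by
  have hgt : (lexGt p (gtVar β p) (eqVar β p)).eval v = true ↔
      digitsVal β p b < digitsVal β p a := by
    rw [digitsVal_lt_iff hb ha, eval_lexGt hg fun i hi => (he i hi).trans eq_comm]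
  have hlt : (lexGt p (ltVar β p) (eqVar β p)).eval v = true ↔
      digitsVal β p a < digitsVal β p b := by
    rw [digitsVal_lt_iff ha hb, eval_lexGt hl he]
  rw [signed_lt_signed_iff, ← hgt, ← hlt, ← eval_zeroForm h ha hb, ← h.1, ← h.2.1]
  simp [resultForm]

lemma map_eval_outClause {c : Prop} [Decidable c] (hR : (resultForm β p).eval v = true ↔ c) :
    (List.range (β + 1)).map (fun d => (outClause β p d).eval v) =
      intOneHot β 1 true (fun _ => if c then 1 else 0) := by
  have hR : (resultForm β p).eval v = decide c :=
    Bool.eq_iff_iff.2 (hR.trans decide_eq_true_iff.symm)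
  rw [List.range_succ_eq_map, List.map_cons, List.map_map]
  simp only [intOneHot, List.ofFn_succ, List.ofFn_zero, List.flatten_cons, List.flatten_nil,
    List.append_nil, digitOneHot]
  refine congrArg₂ _ (by simp [outClause]) (List.ext_getElem (by simp) fun j h₁ h₂ => ?_)
  by_cases hc : c <;> rcases j with _ | _ | j <;> simp [outClause, hc, hR]

lemma prog_conf_input {X : ℕ} (hX : X < 2 * codeLen β p) (t : ℕ) : (prog β p).conf u t X = u X := by
  rw [BNL.conf_eq_conf_zero_of_iter_eq_var _ (clause_of_lt hX), BNL.conf_zero_of_lt _ rfl hX]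

lemma prog_conf_clockVar (t : ℕ) : (prog β p).conf u t (clockVar β p) = decide (2 ≤ t) := by
  have hI : ∀ X, 2 * codeLen β p ≤ X → X ∉ (prog β p).I := fun X hX => by simp [prog, hX]
  have hstart := hI (startVar β p) (by simp only [startVar, ltVar, gtVar, eqVar]; omega)
  have hclock := hI (clockVar β p) (by simp only [clockVar, startVar, ltVar, gtVar, eqVar]; omega)
  match t with
  | 0 => simpa [prog] using BNL.conf_zero_of_notMem _ hclock
  | 1 =>
    rw [BNL.conf_succ]
    simpa [prog, clause_clockVar] using BNL.conf_zero_of_notMem _ hstart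
  | t + 2 => simp [BNL.conf_succ, prog, clause_clockVar, clause_startVar]

lemma prog_isFixedAt_iff (t : ℕ) : (prog β p).IsFixedAt u t ↔ 2 ≤ t := by
  refine ⟨fun h => ?_, fun ht => ?_⟩
  · by_contra! ht
    have := (h.mono (Nat.le_of_lt_succ ht)) (clockVar β p) (by
      simp only [prog, numVars, outVar, Finset.mem_range]; omega)
    simp [prog_conf_clockVar] at this
  · exact (prog_isLayered.isFixedAt fun X _ => rank_le_two X).mono ht

lemma prog_attn_iff (t : ℕ) : (prog β p).attn u t ↔ 2 ≤ t := by
  rw [BNL.attn, show (prog β p).At = {clockVar β p} from rfl]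
  simp [prog_conf_clockVar]

lemma prog_conf_one (h : Encodes β p u s₁ a s₂ b) (ha : ∀ i < p, a i < β)
    (hb : ∀ i < p, b i < β) {i : ℕ} (hi : i < p) :
    ((prog β p).conf u 1 (eqVar β p i) = true ↔ a i = b i) ∧
      ((prog β p).conf u 1 (gtVar β p i) = true ↔ b i < a i) ∧
      ((prog β p).conf u 1 (ltVar β p i) = true ↔ a i < b i) := by
  obtain ⟨-, -, hdig⟩ := h.congr fun X hX => (prog_conf_input hX 0).symm
  obtain ⟨hx, hy⟩ := hdig i hi
  simp only [BNL.conf_succ, prog, clause_eqVar hi, clause_gtVar hi, clause_ltVar hi]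
  exact ⟨eval_oneHotEq hx hy (ha i hi), eval_oneHotGt hx hy (ha i hi),
    eval_oneHotGt hy hx (hb i hi)⟩

lemma prog_out_two (u : ℕ → Bool) : (prog β p).out u 2 =
    (List.range (β + 1)).map fun d => (outClause β p d).eval ((prog β p).conf u 1) := by
  change List.map _ (((Finset.range (β + 1)).map (addLeftEmbedding (outVar β p 0))).sort
    (· ≤ ·)) = _
  rw [← Finset.map_sort _ _ _ _ fun x _ y _ => (add_le_add_iff_left _).symm, Finset.sort_range,
    List.map_map]
  refine List.map_congr_left fun d _ => ?_
  simp [BNL.conf_succ, prog, ← clause_outVar, outVar, add_assoc]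

theorem prog_output {s₁ s₂ : Bool} {b₁ b₂ : Fin p → ℕ} (hb₁ : ∀ i, b₁ i < β)
    (hb₂ : ∀ i, b₂ i < β) {u : ℕ → Bool}
    (hu : Agrees u (intOneHot β p s₁ b₁ ++ intOneHot β p s₂ b₂)) :
    (prog β p).output u =
      intOneHot β 1 true (fun _ => if intVal β p s₂ b₂ < intVal β p s₁ b₁ then 1 else 0) := by
  have hdigits : ∀ b : Fin p → ℕ, (∀ i, b i < β) → ∀ i < p, Function.extend Fin.val b 0 i < β :=
    fun b hb i hi => (Fin.val_injective.extend_apply b 0 ⟨i, hi⟩).symm ▸ hb ⟨i, hi⟩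
  have ha := hdigits b₁ hb₁
  have hb := hdigits b₂ hb₂
  have henc := encodes_of_agrees hu
  have hround := fun i (hi : i < p) => prog_conf_one henc ha hb hi
  have hR := eval_resultForm (henc.congr fun X hX => (prog_conf_input hX 1).symm) ha hb
    (fun i hi => (hround i hi).1) (fun i hi => (hround i hi).2.1) (fun i hi => (hround i hi).2.2)
  rw [← intVal_eq_digitsVal, ← intVal_eq_digitsVal] at hR
  rw [BNL.output, BNL.haltTime_eq_of_isFixedAt_iff prog_isFixedAt_iff, prog_out_two,
    map_eval_outClause hR]

lemma sum_range_numVars (f : ℕ → ℕ) :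
    ∑ X ∈ Finset.range (numVars β p), f X =
      ∑ X ∈ Finset.range (2 * codeLen β p), f X + ∑ i ∈ Finset.range p, f (eqVar β p i) +
        ∑ i ∈ Finset.range p, f (gtVar β p i) + ∑ i ∈ Finset.range p, f (ltVar β p i) +
        f (startVar β p) + f (clockVar β p) + ∑ d ∈ Finset.range (β + 1), f (outVar β p d) := by
  rw [numVars, outVar, Finset.sum_range_add, clockVar, Finset.sum_range_succ,
    Finset.sum_range_succ, startVar, ltVar, Finset.sum_range_add, gtVar, Finset.sum_range_add,
    eqVar, Finset.sum_range_add]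
  rfl

lemma size_resultForm_le : (resultForm β p).size ≤ 18 * p ^ 2 + 4 * p + 29 := by
  have hz : (zeroForm β p).size ≤ 4 * p + 1 := by
    simpa [zeroForm] using size_all_le ((List.range p).map fun i =>
      and (var (xDigit β i 0)) (var (yDigit β p i 0))) 3 (by simp [size])
  have hg := size_lexGt_le p (gtVar β p) (eqVar β p)
  have hl := size_lexGt_le p (ltVar β p) (eqVar β p)
  simp only [resultForm, BForm.or, size]
  omega

lemma sum_size_outClause_le (hβ : 2 ≤ β) :
    ∑ d ∈ Finset.range (β + 1), (outClause β p d).size ≤ 2 * (resultForm β p).size + 2 * β := by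
  obtain ⟨k, rfl⟩ : ∃ k, β = k + 2 := ⟨β - 2, by omega⟩
  have hfls : ∀ d, (outClause (k + 2) p (3 + d)).size = 2 := fun d => by
    simp only [outClause]
    rw [if_neg (by omega), if_neg (by omega), if_neg (by omega)]
    rfl
  rw [show k + 2 + 1 = 3 + k by omega, Finset.sum_range_add,
    Finset.sum_congr rfl fun d _ => hfls d]
  simp [Finset.sum_range_succ, outClause, size]
  omega

theorem prog_size_le (hβ : 2 ≤ β) (hp : 1 ≤ p) : (prog β p).size ≤ 120 * (p * β ^ 2 + p ^ 2) := by
  have hsum : ∀ {n c : ℕ} {f : ℕ → ℕ}, (∀ i < n, f i ≤ c) → ∑ i ∈ Finset.range n, f i ≤ n * c :=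
    fun h => by
      simpa using Finset.sum_le_card_nsmul _ _ _ fun i hi => h i (Finset.mem_range.1 hi)
  have hcard : (Finset.range (numVars β p) \ Finset.range (2 * codeLen β p)).card =
      3 * p + 3 + β := by
    have hle : 2 * codeLen β p ≤ numVars β p := by
      simp only [numVars, outVar, clockVar, startVar, ltVar, gtVar, eqVar]; omega
    rw [Finset.card_sdiff_of_subset (Finset.range_subset_range.2 hle), Finset.card_range,
      Finset.card_range]
    simp only [numVars, outVar, clockVar, startVar, ltVar, gtVar, eqVar]
    omega
  have hin : ∑ X ∈ Finset.range (2 * codeLen β p), (clause β p X).size = 2 * codeLen β p := by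
    rw [Finset.sum_congr rfl fun X hX => by rw [clause_of_lt (Finset.mem_range.1 hX)]]
    simp [size]
  have heq := hsum (n := p) (f := fun i => (clause β p (eqVar β p i)).size)
    fun i hi => (clause_eqVar hi ▸ size_oneHotEq_le β _ _)
  have hgt := hsum (n := p) (f := fun i => (clause β p (gtVar β p i)).size)
    fun i hi => (clause_gtVar hi ▸ size_oneHotGt_le β _ _)
  have hlt := hsum (n := p) (f := fun i => (clause β p (ltVar β p i)).size)
    fun i hi => (clause_ltVar hi ▸ size_oneHotGt_le β _ _)
  have hout := sum_size_outClause_le (p := p) hβ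
  have hR := size_resultForm_le (β := β) (p := p)
  change (Finset.range (numVars β p) \ Finset.range (2 * codeLen β p)).card +
    ∑ X ∈ Finset.range (numVars β p), (clause β p X).size ≤ _
  rw [hcard, sum_range_numVars, hin, clause_startVar, clause_clockVar]
  simp only [clause_outVar]
  have h₁ : p * β ≤ p * β ^ 2 := Nat.mul_le_mul_left p (Nat.le_self_pow two_ne_zero β)
  have h₂ : β ≤ p * β ^ 2 := (Nat.le_mul_of_pos_left β hp).trans h₁
  have h₃ : p ≤ p ^ 2 := Nat.le_self_pow two_ne_zero p
  have h₄ : 1 ≤ p ^ 2 := Nat.one_le_pow _ _ hp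
  simp only [codeLen, size] at *
  nlinarith

end ComparisonProgram

/-- Comparison of two numbers in `Z(p,β)` can be simulated by a halting
BNL-program of size at most `C·(p·β² + p²)` and computation time `2`: the output is the
one-hot representation of `+1 ∈ Z(1,β)` if the first number is strictly greater than the
second, and of `+0` otherwise. -/
theorem integer_comparison_bnl :
    ∃ C : ℕ, ∀ β p : ℕ, 2 ≤ β → 1 ≤ p → ∃ Λ : BNL,
      Λ.Halting ∧ Λ.size ≤ C * (p * β ^ 2 + p ^ 2) ∧ Λ.HasCompTime 2 ∧
      Λ.I.card = 2 * (1 + p * β) ∧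
      ∀ (s₁ s₂ : Bool) (b₁ b₂ : Fin p → ℕ), (∀ i, b₁ i < β) → (∀ i, b₂ i < β) →
        ∀ u : ℕ → Bool, Agrees u (intOneHot β p s₁ b₁ ++ intOneHot β p s₂ b₂) →
          Λ.output u =
            intOneHot β 1 true
              (fun _ => if intVal β p s₂ b₂ < intVal β p s₁ b₁ then 1 else 0) := by
  refine ⟨120, fun β p hβ hp => ⟨ComparisonProgram.prog β p, ?_⟩⟩
  obtain ⟨hhalt, htime⟩ := BNL.halting_and_hasCompTime_of
    (fun _ => ComparisonProgram.prog_isFixedAt_iff) (fun _ => ComparisonProgram.prog_attn_iff)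
  exact ⟨hhalt, ComparisonProgram.prog_size_le hβ hp, htime, Finset.card_range _,
    fun _ _ _ _ hb₁ hb₂ _ hu => ComparisonProgram.prog_output hb₁ hb₂ hu⟩
end

section
/- Let β ≥ 2 and p ≥ 1, and let x, y : {1,…,p} → {0,…,β−1} be digit sequences (position i carrying weight β^{i−1}). Then Σ_{i=1}^{p} x_i·β^{i−1} > Σ_{i=1}^{p} y_i·β^{i−1} if and only if both of the following hold: (a) for every position i with x_i < y_i there exists a position j with i < j ≤ p and x_j > y_j; and (b) there exists a position i with x_i ≠ y_i. -/
open Finset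

private lemma digit_sum_lt_pow (β : ℕ) (hβ : 1 ≤ β) (y : ℕ → ℕ) (n : ℕ)
    (hy : ∀ i, 1 ≤ i → i ≤ n → y i < β) :
    (∑ i ∈ Finset.Ioc 0 n, y i * β ^ (i - 1)) < β ^ n := by
  induction n with
  | zero => simpa using hβ
  | succ n ih =>
    rw [Finset.sum_Ioc_succ_top (Nat.zero_le n)]
    have h1 : y (n + 1) * β ^ (n + 1 - 1) ≤ (β - 1) * β ^ n := by
      have := hy (n + 1) (Nat.le_add_left 1 n) le_rfl
      simpa using Nat.mul_le_mul_right _ (Nat.le_sub_one_of_lt this)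
    have h2 := ih (fun i hi1 hi2 => hy i hi1 (hi2.trans (Nat.le_succ n)))
    have hb : (1:ℕ) ≤ β ^ n := Nat.one_le_pow _ _ (by omega)
    have h3 : (β - 1) * β ^ n = β ^ (n + 1) - β ^ n := by
      rw [Nat.sub_one_mul, pow_succ']
    have h4 : β ^ n ≤ β ^ (n + 1) := Nat.pow_le_pow_right hβ (Nat.le_succ n)
    omega

/-- Split `∑_{Ioc 0 p}` at an interior point `m`, `1 ≤ m ≤ p`. -/
private lemma sum_split (f : ℕ → ℕ) {m p : ℕ} (h1 : 1 ≤ m) (h2 : m ≤ p) :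
    (∑ i ∈ Finset.Ioc 0 p, f i) =
      (∑ i ∈ Finset.Ioc 0 (m - 1), f i) + f m + (∑ i ∈ Finset.Ioc m p, f i) := by
  have e1 : (∑ i ∈ Finset.Ioc 0 m, f i) + (∑ i ∈ Finset.Ioc m p, f i)
      = ∑ i ∈ Finset.Ioc 0 p, f i := Finset.sum_Ioc_consecutive f (Nat.zero_le m) h2
  have e2 : (∑ i ∈ Finset.Ioc 0 m, f i)
      = (∑ i ∈ Finset.Ioc 0 (m - 1), f i) + f m := by
    obtain ⟨k, rfl⟩ := Nat.exists_eq_add_of_le h1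
    simpa [Nat.add_comm] using Finset.sum_Ioc_succ_top (Nat.zero_le k) f
  omega

/-- Correctness of the positionwise digit-comparison criterion for two
`p`-digit base-`β` natural numbers (digits indexed from the least significant position `1`
to the most significant position `p`, position `i` carrying weight `β^(i-1)`):
the first number is strictly greater than the second iff (a) every position where the first
has a smaller digit is followed (to the left) by a position where it has a greater digit,
and (b) the digit sequences differ somewhere. -/
theorem digit_comparison_correct (β p : ℕ) (hβ : 2 ≤ β) (hp : 1 ≤ p)
    (x y : ℕ → ℕ) (hx : ∀ i, 1 ≤ i → i ≤ p → x i < β) (hy : ∀ i, 1 ≤ i → i ≤ p → y i < β) :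
    (∑ i ∈ Finset.Icc 1 p, y i * β ^ (i - 1)) < (∑ i ∈ Finset.Icc 1 p, x i * β ^ (i - 1)) ↔
      ((∀ i, 1 ≤ i → i ≤ p → x i < y i → ∃ j, i < j ∧ j ≤ p ∧ y j < x j) ∧
        ∃ i, 1 ≤ i ∧ i ≤ p ∧ x i ≠ y i) := by
  have hIcc : Finset.Icc 1 p = Finset.Ioc 0 p := rfl
  rw [hIcc]
  constructor
  · intro hlt
    constructor
    · intro i hi1 hi2 hxy
      by_contra hno
      push_neg at hno
      have hsx := sum_split (fun j => x j * β ^ (j - 1)) hi1 hi2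
      have hsy := sum_split (fun j => y j * β ^ (j - 1)) hi1 hi2
      have hlow : (∑ j ∈ Finset.Ioc 0 (i - 1), x j * β ^ (j - 1)) < β ^ (i - 1) :=
        digit_sum_lt_pow β (by omega) x (i - 1) (fun j hj1 hj2 => hx j hj1 (by omega))
      have hhigh : (∑ j ∈ Finset.Ioc i p, x j * β ^ (j - 1)) ≤
          ∑ j ∈ Finset.Ioc i p, y j * β ^ (j - 1) := by
        apply Finset.sum_le_sum
        intro j hj
        rw [Finset.mem_Ioc] at hj
        exact Nat.mul_le_mul_right _ (hno j hj.1 hj.2)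
      have hmid : x i * β ^ (i - 1) + β ^ (i - 1) ≤ y i * β ^ (i - 1) := by
        have h := Nat.mul_le_mul_right (β ^ (i - 1)) (Nat.succ_le_of_lt hxy)
        simpa [Nat.succ_mul] using h
      omega
    · by_contra hno
      push_neg at hno
      have heq : (∑ i ∈ Finset.Ioc 0 p, y i * β ^ (i - 1))
          = ∑ i ∈ Finset.Ioc 0 p, x i * β ^ (i - 1) := by
        apply Finset.sum_congr rfl
        intro i hi
        rw [Finset.mem_Ioc] at hi
        rw [hno i hi.1 hi.2]
      omega
  · rintro ⟨ha, i₀, hi₀1, hi₀2, hi₀ne⟩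
    set S := (Finset.Ioc 0 p).filter (fun i => x i ≠ y i) with hS
    have hSne : S.Nonempty :=
      ⟨i₀, by simp [hS, Finset.mem_Ioc]; exact ⟨⟨hi₀1, hi₀2⟩, hi₀ne⟩⟩
    set m := S.max' hSne with hm
    have hmS : m ∈ S := S.max'_mem hSne
    have hmmax : ∀ j ∈ S, j ≤ m := fun j hj => S.le_max' j hj
    rw [hS, Finset.mem_filter, Finset.mem_Ioc] at hmS
    obtain ⟨⟨hm1, hm2⟩, hmne⟩ := hmS
    have hxm : y m < x m := by
      rcases Nat.lt_or_ge (x m) (y m) with h | h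
      · obtain ⟨j, hj1, hj2, hj3⟩ := ha m hm1 hm2 h
        have : j ∈ S := by
          rw [hS, Finset.mem_filter, Finset.mem_Ioc]
          exact ⟨⟨by omega, hj2⟩, by omega⟩
        have := hmmax j this
        omega
      · omega
    have hsx := sum_split (fun j => x j * β ^ (j - 1)) hm1 hm2
    have hsy := sum_split (fun j => y j * β ^ (j - 1)) hm1 hm2
    have hlow : (∑ j ∈ Finset.Ioc 0 (m - 1), y j * β ^ (j - 1)) < β ^ (m - 1) :=
      digit_sum_lt_pow β (by omega) y (m - 1) (fun j hj1 hj2 => hy j hj1 (by omega))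
    have hhigh : (∑ j ∈ Finset.Ioc m p, y j * β ^ (j - 1))
        = ∑ j ∈ Finset.Ioc m p, x j * β ^ (j - 1) := by
      apply Finset.sum_congr rfl
      intro j hj
      rw [Finset.mem_Ioc] at hj
      have hxy : x j = y j := by
        by_contra hne
        have : j ∈ S := by
          rw [hS, Finset.mem_filter, Finset.mem_Ioc]
          exact ⟨⟨by omega, hj.2⟩, hne⟩
        have := hmmax j this
        omega
      rw [hxy]
    have hmid : y m * β ^ (m - 1) + β ^ (m - 1) ≤ x m * β ^ (m - 1) := by
      have h := Nat.mul_le_mul_right (β ^ (m - 1)) (Nat.succ_le_of_lt hxm)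
      simpa [Nat.succ_mul] using h
    omega
end

section
/- Define step : List Bool → List Bool by step [] = [], step [a] = [a], and step (a :: b :: l) = (xor a b) :: step l. Then: (a) for every list l, step l contains an odd number of occurrences of true if and only if l does; and (b) for every k ∈ ℕ and every nonempty list l of length at most 2^k, the k-fold iterate step^[k] applied to l is the one-element list [b], where b = true if and only if l contains an odd number of occurrences of true. -/
/-- The pairwise-XOR halving step on lists of Booleans: adjacent entries are paired and
each pair is replaced by its exclusive or; a final unpaired entry is kept unchanged. -/
def step : List Bool → List Bool
  | [] => []
  | [a] => [a]
  | a :: b :: l => xor a b :: step l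

lemma step_count_mod (l : List Bool) : (step l).count true % 2 = l.count true % 2 := by
  induction l using step.induct with
  | case1 => rfl
  | case2 a => rfl
  | case3 a b l ih =>
    simp only [step, List.count_cons]
    cases a <;> cases b <;> simp <;> omega

lemma step_ne_nil (l : List Bool) (h : l ≠ []) : step l ≠ [] := by
  match l with
  | [a] => simp [step]
  | a :: b :: l => simp [step]

lemma step_length (l : List Bool) : 2 * (step l).length ≤ l.length + 1 := by
  induction l using step.induct with
  | case1 => simp [step]
  | case2 a => simp [step]
  | case3 a b l ih => simp [step] at *; omega

/-- (a) `step` preserves the parity of the number of occurrences of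
`true`; (b) for every `k` and every nonempty list `l` of length at most `2^k`, the `k`-fold
iterate of `step` applied to `l` is the one-element list `[b]`, where `b = true` iff `l`
contains an odd number of occurrences of `true`. -/
theorem step_parity_correct :
    (∀ l : List Bool, (Odd ((step l).count true) ↔ Odd (l.count true))) ∧
      ∀ (k : ℕ) (l : List Bool), l ≠ [] → l.length ≤ 2 ^ k →
        step^[k] l = [decide (Odd (l.count true))] := by
  have hpar : ∀ l : List Bool, (Odd ((step l).count true) ↔ Odd (l.count true)) := by
    intro l
    have := step_count_mod l
    simp [Nat.odd_iff]
    omega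
  refine ⟨hpar, ?_⟩
  intro k
  induction k with
  | zero =>
    intro l hne hlen
    match l, hne, hlen with
    | [a], _, _ =>
      cases a <;> simp [Nat.odd_iff]
  | succ k ih =>
    intro l hne hlen
    rw [Function.iterate_succ_apply]
    have h1 : (step l).length ≤ 2 ^ k := by
      have := step_length l
      have : 2 ^ (k+1) = 2 * 2 ^ k := by ring
      omega
    rw [ih (step l) (step_ne_nil l hne) h1]
    congr 1
    simp [hpar l]
end
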